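/- arXiv:2401.13496 — 2 statements merged into one kernel-verified Lean document; each statement's English description precedes it below -/
import Mathlib

section
/- Let n be a positive integer, let A_C, A_G : ℝ → Matrix (Fin n) (Fin n) ℝ be differentiable at p₀, let i_nl : (Fin n → ℝ) → (Fin n → ℝ) be a continuously differentiable nonlinear current function, let i_s : ℝ → (Fin n → ℝ) be independent of p, and let x : ℝ → ℝ → (Fin n → ℝ) be jointly twice continuously differentiable. Suppose that for every p near p₀ and every t, A_C(p) *ᵥ (∂x/∂t)(p,t) + A_G(p) *ᵥ x(p,t) − i_nl(x(p,t)) = i_s(t). Then the sensitivity y(t) := (∂x/∂p)(p₀,t) satisfies A_C(p₀) *ᵥ y'(t) + J_G(t) *ᵥ y(t) + (dA_C/dp)(p₀) *ᵥ (∂x/∂t)(p₀,t) + (dA_G/dp)(p₀) *ᵥ x(p₀,t) = 0 for every t, where J_G(t) is the Jacobian matrix A_G(p₀) minus the Fréchet derivative of i_nl evaluated at x(p₀,t). -/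
open Matrix

attribute [local instance] Matrix.normedAddCommGroup Matrix.normedSpace

/-!
Differentiate the MNA identity in `p` at `p₀`: it holds identically near `p₀`, so its
`p`-derivative vanishes. The product rule for `A(p) *ᵥ v(p)` and the chain rule for `i_nl ∘ x`
produce every term of the sensitivity equation, except that `A_C(p₀)` multiplies `∂ₚ∂ₜx`;
symmetry of the second derivative of the `C²` map `(p, t) ↦ x p t` turns it into
`∂ₜ∂ₚx = y'`.
-/

theorem HasDerivAt.matrix_mulVec {𝕜 : Type*} [NontriviallyNormedField 𝕜]
    {m n : Type*} [Fintype m] [Fintype n] {A : 𝕜 → Matrix m n 𝕜} {v : 𝕜 → n → 𝕜}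
    {A' : Matrix m n 𝕜} {v' : n → 𝕜} {p : 𝕜}
    (hA : HasDerivAt A A' p) (hv : HasDerivAt v v' p) :
    HasDerivAt (fun q => A q *ᵥ v q) (A' *ᵥ v p + A p *ᵥ v') p := by
  refine hasDerivAt_pi.2 fun i => ?_
  have hentry : ∀ j, HasDerivAt (fun q => A q i j * v q j) (A' i j * v p j + A p i j * v' j) p :=
    fun j => (hasDerivAt_pi.1 (hasDerivAt_pi.1 hA i) j).mul (hasDerivAt_pi.1 hv j)
  simpa [mulVec, dotProduct, Finset.sum_add_distrib] using
    HasDerivAt.fun_sum (u := Finset.univ) fun j _ => hentry j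

section PartialDerivatives

variable {𝕜 : Type*} [NontriviallyNormedField 𝕜] {E : Type*} [NormedAddCommGroup E]
  [NormedSpace 𝕜 E] {f : 𝕜 × 𝕜 → E} {f' : 𝕜 × 𝕜 →L[𝕜] E} {p t : 𝕜}

theorem HasFDerivAt.hasDerivAt_partial_fst (hf : HasFDerivAt f f' (p, t)) :
    HasDerivAt (fun q => f (q, t)) (f' (1, 0)) p :=
  hf.comp_hasDerivAt p ((hasDerivAt_id p).prodMk (hasDerivAt_const p t))

theorem HasFDerivAt.hasDerivAt_partial_snd (hf : HasFDerivAt f f' (p, t)) :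
    HasDerivAt (fun s => f (p, s)) (f' (0, 1)) t :=
  hf.comp_hasDerivAt t ((hasDerivAt_const t p).prodMk (hasDerivAt_id t))

end PartialDerivatives

theorem ContDiff.hasDerivAt_deriv_comm {E : Type*} [NormedAddCommGroup E] [NormedSpace ℝ E]
    {x : ℝ → ℝ → E} (hx : ContDiff ℝ 2 (fun q : ℝ × ℝ => x q.1 q.2)) (p t : ℝ) :
    HasDerivAt (fun q => deriv (fun s => x q s) t)
      (deriv (fun s => deriv (fun q => x q s) p) t) p := by
  set f : ℝ × ℝ → E := fun q => x q.1 q.2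
  have hf : ∀ z, HasFDerivAt f (fderiv ℝ f z) z :=
    fun z => (hx.differentiable (by norm_num) z).hasFDerivAt
  have hf' : HasFDerivAt (fderiv ℝ f) (fderiv ℝ (fderiv ℝ f) (p, t)) (p, t) :=
    ((hx.fderiv_right (m := 1) (by norm_num)).differentiable one_ne_zero (p, t)).hasFDerivAt
  have hdt : (fun q => deriv (fun s => x q s) t) = fun q => fderiv ℝ f (q, t) (0, 1) :=
    funext fun q => (hf (q, t)).hasDerivAt_partial_snd.deriv
  have hdp : (fun s => deriv (fun q => x q s) p) = fun s => fderiv ℝ f (p, s) (1, 0) :=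
    funext fun s => (hf (p, s)).hasDerivAt_partial_fst.deriv
  have hsymm : fderiv ℝ (fderiv ℝ f) (p, t) (1, 0) (0, 1)
      = fderiv ℝ (fderiv ℝ f) (p, t) (0, 1) (1, 0) :=
    (hx.contDiffAt.isSymmSndFDerivAt (by simp)).eq _ _
  rw [hdt, hdp, (hf'.hasDerivAt_partial_snd.clm_apply (hasDerivAt_const t _)).deriv]
  simpa [hsymm] using
    hf'.hasDerivAt_partial_fst.clm_apply (hasDerivAt_const p ((0 : ℝ), (1 : ℝ)))

theorem transient_direct_sensitivity_nonlinear_general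
    (n : ℕ)
    (A_C A_G : ℝ → Matrix (Fin n) (Fin n) ℝ) (p₀ : ℝ)
    (hAC : DifferentiableAt ℝ A_C p₀) (hAG : DifferentiableAt ℝ A_G p₀)
    (i_nl : (Fin n → ℝ) → (Fin n → ℝ)) (hinl : ContDiff ℝ 1 i_nl)
    (i_s : ℝ → (Fin n → ℝ))
    (x : ℝ → ℝ → (Fin n → ℝ))
    (hx : ContDiff ℝ 2 (fun q : ℝ × ℝ => x q.1 q.2))
    (hMNA : ∀ᶠ p in nhds p₀, ∀ t : ℝ,
      A_C p *ᵥ deriv (fun s => x p s) t + A_G p *ᵥ x p t - i_nl (x p t) = i_s t)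
    (J_G : ℝ → Matrix (Fin n) (Fin n) ℝ)
    (hJG : ∀ t : ℝ,
      J_G t = A_G p₀ - LinearMap.toMatrix' (fderiv ℝ i_nl (x p₀ t) : (Fin n → ℝ) →ₗ[ℝ] (Fin n → ℝ))) :
    ∀ t : ℝ,
      A_C p₀ *ᵥ deriv (fun s => deriv (fun p => x p s) p₀) t
        + J_G t *ᵥ deriv (fun p => x p t) p₀
        + deriv A_C p₀ *ᵥ deriv (fun s => x p₀ s) t
        + deriv A_G p₀ *ᵥ x p₀ t = 0 := by
  intro t
  set y := deriv (fun p => x p t) p₀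
  have hy : HasDerivAt (fun p => x p t) y p₀ :=
    (hx.differentiable (by norm_num) (p₀, t)).hasFDerivAt.hasDerivAt_partial_fst
      |>.differentiableAt.hasDerivAt
  have hMNA_deriv := ((hAC.hasDerivAt.matrix_mulVec (hx.hasDerivAt_deriv_comm p₀ t)).add
    (hAG.hasDerivAt.matrix_mulVec hy)).sub
    ((hinl.differentiable one_ne_zero (x p₀ t)).hasFDerivAt.comp_hasDerivAt p₀ hy)
  have hMNA_const :=
    (hasDerivAt_const p₀ (i_s t)).congr_of_eventuallyEq (hMNA.mono fun p hp => hp t)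
  rw [hJG t, sub_mulVec, LinearMap.toMatrix'_mulVec, ContinuousLinearMap.coe_coe,
    ← hMNA_deriv.unique hMNA_const]
  abel

/-- **Transient direct sensitivity equation for a nonlinear MNA system.**
If `A_C(p) *ᵥ ∂x/∂t(p,t) + A_G(p) *ᵥ x(p,t) − i_nl(x(p,t)) = i_s(t)` holds for all `p`
near `p₀` and all `t`, with `A_C, A_G` differentiable at `p₀`, `i_nl` continuously
differentiable and `x` jointly `C²`, then the sensitivity `y(t) = ∂x/∂p(p₀,t)` satisfies
`A_C(p₀) *ᵥ y'(t) + J_G(t) *ᵥ y(t) + A_C'(p₀) *ᵥ ∂x/∂t(p₀,t) + A_G'(p₀) *ᵥ x(p₀,t) = 0`,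
where `J_G(t) = A_G(p₀) - ∂i_nl/∂x (x(p₀,t))` is the Jacobian matrix. -/
theorem transient_direct_sensitivity_nonlinear
    (n : ℕ) (hn : 0 < n)
    (A_C A_G : ℝ → Matrix (Fin n) (Fin n) ℝ) (p₀ : ℝ)
    (hAC : DifferentiableAt ℝ A_C p₀) (hAG : DifferentiableAt ℝ A_G p₀)
    (i_nl : (Fin n → ℝ) → (Fin n → ℝ)) (hinl : ContDiff ℝ 1 i_nl)
    (i_s : ℝ → (Fin n → ℝ))
    (x : ℝ → ℝ → (Fin n → ℝ))
    (hx : ContDiff ℝ 2 (fun q : ℝ × ℝ => x q.1 q.2))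
    (hMNA : ∀ᶠ p in nhds p₀, ∀ t : ℝ,
      A_C p *ᵥ deriv (fun s => x p s) t + A_G p *ᵥ x p t - i_nl (x p t) = i_s t)
    (J_G : ℝ → Matrix (Fin n) (Fin n) ℝ)
    (hJG : ∀ t : ℝ,
      J_G t = A_G p₀ - LinearMap.toMatrix' (fderiv ℝ i_nl (x p₀ t) : (Fin n → ℝ) →ₗ[ℝ] (Fin n → ℝ))) :
    ∀ t : ℝ,
      A_C p₀ *ᵥ deriv (fun s => deriv (fun p => x p s) p₀) t
        + J_G t *ᵥ deriv (fun p => x p t) p₀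
        + deriv A_C p₀ *ᵥ deriv (fun s => x p₀ s) t
        + deriv A_G p₀ *ᵥ x p₀ t = 0 :=
  transient_direct_sensitivity_nonlinear_general n A_C A_G p₀ hAC hAG i_nl hinl i_s x hx hMNA J_G
    hJG
end

section
/- Let n be a positive integer, A_C a constant real n×n matrix, J_G : ℝ → Matrix (Fin n) (Fin n) ℝ continuous, c : ℝ → (Fin n → ℝ) continuous, s : ℝ → (Fin n → ℝ) continuous, and T > 0. Let y : ℝ → (Fin n → ℝ) be continuously differentiable with y(0) = 0 and A_C *ᵥ y'(t) + J_G(t) *ᵥ y(t) + s(t) = 0 for all t ∈ [0,T], and let λ : ℝ → (Fin n → ℝ) be continuously differentiable with λ(T) = 0 and (A_C)ᵀ *ᵥ λ'(t) − (J_G(t))ᵀ *ᵥ λ(t) = c(t) for all t ∈ [0,T]. Then ∫₀ᵀ c(t) ⬝ᵥ y(t) dt = ∫₀ᵀ λ(t) ⬝ᵥ s(t) dt. -/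
/-!
The pairing `g(t) = λ(t) ⬝ᵥ (A_C *ᵥ y(t))` vanishes at both ends, because `y(0) = 0` and
`λ(T) = 0`. Moving `A_C` and `J_G` across the dot product by transposition, the two differential
equations give `g' = c ⬝ᵥ y - λ ⬝ᵥ s`, the `J_G` terms cancelling. Integrating `g'` over `[0, T]`
therefore yields `∫ c ⬝ᵥ y = ∫ λ ⬝ᵥ s`.
-/

open Matrix

section

variable {n : Type*} [Fintype n]

theorem ContinuousOn.dotProduct {X R : Type*} [TopologicalSpace X] [TopologicalSpace R]
    [Mul R] [AddCommMonoid R] [ContinuousAdd R] [ContinuousMul R]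
    {A B : X → n → R} {S : Set X} (hA : ContinuousOn A S) (hB : ContinuousOn B S) :
    ContinuousOn (fun x => A x ⬝ᵥ B x) S := by
  dsimp only [_root_.dotProduct]
  fun_prop

variable {𝕜 : Type*} [NontriviallyNormedField 𝕜] {f g : 𝕜 → n → 𝕜} {f' g' : n → 𝕜} {x : 𝕜}

theorem HasDerivAt.dotProduct (hf : HasDerivAt f f' x) (hg : HasDerivAt g g' x) :
    HasDerivAt (fun t => f t ⬝ᵥ g t) (f' ⬝ᵥ g x + f x ⬝ᵥ g') x := by
  simp only [_root_.dotProduct, ← Finset.sum_add_distrib]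
  exact HasDerivAt.fun_sum fun i _ => (hasDerivAt_pi.1 hf i).mul (hasDerivAt_pi.1 hg i)

theorem HasDerivAt.mulVec {m : Type*} (A : Matrix m n 𝕜) (hf : HasDerivAt f f' x) :
    HasDerivAt (fun t => A *ᵥ f t) (A *ᵥ f') x :=
  hasDerivAt_pi.2 fun i => by
    show HasDerivAt (fun t => A i ⬝ᵥ f t) (A i ⬝ᵥ f') x
    simpa only [zero_dotProduct, zero_add] using (hasDerivAt_const x (A i)).dotProduct hf

end

theorem dotProduct_adjoint_pairing {n R : Type*} [Fintype n] [CommRing R]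
    (A J : Matrix n n R) {y y' s lam lam' c : n → R}
    (hy : A *ᵥ y' + J *ᵥ y + s = 0) (hlam : Aᵀ *ᵥ lam' - Jᵀ *ᵥ lam = c) :
    lam' ⬝ᵥ (A *ᵥ y) + lam ⬝ᵥ (A *ᵥ y') = c ⬝ᵥ y - lam ⬝ᵥ s := by
  have hAy' : A *ᵥ y' = -(J *ᵥ y) - s := by linear_combination (norm := module) hy
  rw [← hlam, hAy', sub_dotProduct, mulVec_transpose, mulVec_transpose, ← dotProduct_mulVec,
    ← dotProduct_mulVec, dotProduct_sub, dotProduct_neg]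
  ring

theorem transient_adjoint_sensitivity_general
    (n : ℕ)
    (A_C : Matrix (Fin n) (Fin n) ℝ)
    (J_G : ℝ → Matrix (Fin n) (Fin n) ℝ)
    (c s : ℝ → (Fin n → ℝ)) (hc : Continuous c) (hs : Continuous s)
    (T : ℝ) (hT : 0 < T)
    (y y' : ℝ → (Fin n → ℝ))
    (hy : ∀ t ∈ Set.Icc (0 : ℝ) T, HasDerivAt y (y' t) t)
    (hy0 : y 0 = 0)
    (hyeq : ∀ t ∈ Set.Icc (0 : ℝ) T, A_C *ᵥ y' t + J_G t *ᵥ y t + s t = 0)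
    (lam lam' : ℝ → (Fin n → ℝ))
    (hlam : ∀ t ∈ Set.Icc (0 : ℝ) T, HasDerivAt lam (lam' t) t)
    (hlamT : lam T = 0)
    (hlameq : ∀ t ∈ Set.Icc (0 : ℝ) T, A_Cᵀ *ᵥ lam' t - (J_G t)ᵀ *ᵥ lam t = c t) :
    ∫ t in (0 : ℝ)..T, c t ⬝ᵥ y t = ∫ t in (0 : ℝ)..T, lam t ⬝ᵥ s t := by
  have hyc : ContinuousOn y (Set.Icc 0 T) := fun t ht => (hy t ht).continuousAt.continuousWithinAt
  have hlamc : ContinuousOn lam (Set.Icc 0 T) := fun t ht =>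
    (hlam t ht).continuousAt.continuousWithinAt
  have hcy : IntervalIntegrable (fun t => c t ⬝ᵥ y t) MeasureTheory.volume 0 T :=
    (hc.continuousOn.dotProduct hyc).intervalIntegrable_of_Icc hT.le
  have hls : IntervalIntegrable (fun t => lam t ⬝ᵥ s t) MeasureTheory.volume 0 T :=
    (hlamc.dotProduct hs.continuousOn).intervalIntegrable_of_Icc hT.le
  have hpairing : ∀ t ∈ Set.uIcc 0 T, HasDerivAt (fun u => lam u ⬝ᵥ (A_C *ᵥ y u))
      (c t ⬝ᵥ y t - lam t ⬝ᵥ s t) t := by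
    intro t ht
    rw [Set.uIcc_of_le hT.le] at ht
    exact ((hlam t ht).dotProduct ((hy t ht).mulVec A_C)).congr_deriv
      (dotProduct_adjoint_pairing A_C (J_G t) (hyeq t ht) (hlameq t ht))
  have hFTC := intervalIntegral.integral_eq_sub_of_hasDerivAt hpairing (hcy.sub hls)
  rw [intervalIntegral.integral_sub hcy hls, hlamT, hy0] at hFTC
  simpa [sub_eq_zero] using hFTC

/-- **Transient adjoint sensitivity identity.**
If `y` solves the sensitivity system `A_C *ᵥ y' + J_G *ᵥ y + s = 0` on `[0,T]` with
`y(0) = 0`, and `λ` solves the adjoint system `A_Cᵀ *ᵥ λ' − J_Gᵀ *ᵥ λ = c` on `[0,T]`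
with the terminal condition `λ(T) = 0`, then `∫₀ᵀ c ⬝ᵥ y dt = ∫₀ᵀ λ ⬝ᵥ s dt`. -/
theorem transient_adjoint_sensitivity
    (n : ℕ) (hn : 0 < n)
    (A_C : Matrix (Fin n) (Fin n) ℝ)
    (J_G : ℝ → Matrix (Fin n) (Fin n) ℝ) (hJG : Continuous J_G)
    (c s : ℝ → (Fin n → ℝ)) (hc : Continuous c) (hs : Continuous s)
    (T : ℝ) (hT : 0 < T)
    (y y' : ℝ → (Fin n → ℝ))
    (hy : ∀ t ∈ Set.Icc (0 : ℝ) T, HasDerivAt y (y' t) t)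
    (hy' : ContinuousOn y' (Set.Icc (0 : ℝ) T))
    (hy0 : y 0 = 0)
    (hyeq : ∀ t ∈ Set.Icc (0 : ℝ) T, A_C *ᵥ y' t + J_G t *ᵥ y t + s t = 0)
    (lam lam' : ℝ → (Fin n → ℝ))
    (hlam : ∀ t ∈ Set.Icc (0 : ℝ) T, HasDerivAt lam (lam' t) t)
    (hlam' : ContinuousOn lam' (Set.Icc (0 : ℝ) T))
    (hlamT : lam T = 0)
    (hlameq : ∀ t ∈ Set.Icc (0 : ℝ) T, A_Cᵀ *ᵥ lam' t - (J_G t)ᵀ *ᵥ lam t = c t) :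
    ∫ t in (0 : ℝ)..T, c t ⬝ᵥ y t = ∫ t in (0 : ℝ)..T, lam t ⬝ᵥ s t :=
  transient_adjoint_sensitivity_general n A_C J_G c s hc hs T hT y y' hy hy0 hyeq lam lam' hlam
    hlamT hlameq
end
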